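/- arXiv:math/0106239 — 2 statements merged into one kernel-verified Lean document; each statement's English description precedes it below -/
import Mathlib

section
/- Let k be a field, A := k[w,x,z][[y]], B := k[w,x,1/x,z][[y]], φ : A → B the coefficientwise localization map, and P the ideal of A generated by the constant power series w and z. The quotient ring B/(P.map φ) is isomorphic as a ring to k[x,1/x][[y]], the power series ring in y over the Laurent polynomial ring k[x,1/x]. -/
/-- `A = k[w,x,z][[y]]`: power series in `y` over the polynomial ring `k[w,x,z]`,
with `w = X 0`, `x = X 1`, `z = X 2`. -/
abbrev A (k : Type*) [Field k] : Type _ := PowerSeries (MvPolynomial (Fin 3) k)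

/-- `B = k[w,x,1/x,z][[y]]`: power series in `y` over the localization of `k[w,x,z]`
away from `x`. -/
abbrev B (k : Type*) [Field k] : Type _ :=
  PowerSeries (Localization.Away (MvPolynomial.X 1 : MvPolynomial (Fin 3) k))

/-- The coefficientwise localization map `φ : A → B`. -/
noncomputable def φ (k : Type*) [Field k] : A k →+* B k :=
  PowerSeries.map (algebraMap (MvPolynomial (Fin 3) k)
    (Localization.Away (MvPolynomial.X 1 : MvPolynomial (Fin 3) k)))

/-- The ideal `P = (w, z)` of `A`, generated by the constant power series `w` and `z`. -/
noncomputable def P (k : Type*) [Field k] : Ideal (A k) :=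
  Ideal.span {PowerSeries.C (MvPolynomial.X 0 : MvPolynomial (Fin 3) k),
    PowerSeries.C (MvPolynomial.X 2 : MvPolynomial (Fin 3) k)}

/-!
Let `ρ : k[w,x,z] → k[x]` kill `w` and `z`. Since `k[x] ⊆ k[w,x,z]` is a section of `ρ` and
`p - ρ p ∈ (w, z)` for every `p`, the kernel of `ρ` is `(w, z)`. Localizing at `x` gives a
surjection `k[w,x,1/x,z] → k[x,1/x]` whose kernel is the extension of `(w, z)`, and applying
it coefficientwise gives a surjection `B → k[x,1/x][[y]]`. Its kernel consists of the series
with all coefficients in `(w, z)`, which is the ideal generated by the constants `w` and `z`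
because that ideal is finitely generated.
-/

open MvPolynomial

theorem RingHom.ker_eq_of_forall_sub_mem {R S : Type*} [CommRing R] [Semiring S]
    (f : R →+* S) (g : S →+* R) {I : Ideal R} (hI : I ≤ RingHom.ker f)
    (h : ∀ p, p - g (f p) ∈ I) : RingHom.ker f = I := by
  refine le_antisymm (fun p hp => ?_) hI
  simpa [(RingHom.mem_ker).mp hp] using h p

namespace MvPolynomial

variable {σ R : Type*} [CommRing R]

noncomputable def killVars (s : Set σ) [DecidablePred (· ∈ s)] :
    MvPolynomial σ R →ₐ[R] MvPolynomial σ R :=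
  aeval fun i => if i ∈ s then 0 else X i

theorem sub_killVars_mem_span_X (s : Set σ) [DecidablePred (· ∈ s)] (p : MvPolynomial σ R) :
    p - killVars s p ∈ Ideal.span (X '' s) := by
  induction p using MvPolynomial.induction_on with
  | C a => simp [killVars]
  | add p q hp hq => simpa [add_sub_add_comm] using Ideal.add_mem _ hp hq
  | mul_X p i hp =>
    by_cases hi : i ∈ s
    · simpa [killVars, hi] using
        Ideal.mul_mem_left _ p (Ideal.subset_span (Set.mem_image_of_mem X hi))
    · simpa [killVars, hi, ← sub_mul] using Ideal.mul_mem_right (X i) _ hp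

end MvPolynomial

namespace PowerSeries

variable {R S : Type*} [CommRing R] [Semiring S]

theorem mem_span_C_pair_iff (a b : R) (p : PowerSeries R) :
    p ∈ Ideal.span {C a, C b} ↔ ∀ n, coeff n p ∈ Ideal.span {a, b} := by
  simp only [Ideal.mem_span_pair]
  constructor
  · rintro ⟨u, v, rfl⟩ n
    exact ⟨coeff n u, coeff n v, by simp [coeff_mul_C]⟩
  · intro hp
    choose u v huv using hp
    exact ⟨mk u, mk v, by ext n; simp [coeff_mul_C, huv n]⟩

theorem ker_map_eq_span_C_pair (f : R →+* S) {a b : R} (h : RingHom.ker f = Ideal.span {a, b}) :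
    RingHom.ker (map f) = Ideal.span {C a, C b} := by
  ext p
  simp [mem_span_C_pair_iff, ← h, PowerSeries.ext_iff]

end PowerSeries

section

variable (k : Type*) [Field k]

noncomputable def restrictToX : MvPolynomial (Fin 3) k →ₐ[k] Polynomial k :=
  aeval fun i => if i = 1 then Polynomial.X else 0

theorem ker_restrictToX :
    RingHom.ker (restrictToX k) = Ideal.span {(X 0 : MvPolynomial (Fin 3) k), X 2} := by
  have hkill : (Polynomial.aeval (X 1)).comp (restrictToX k) = killVars {0, 2} := by
    ext i
    fin_cases i <;> simp [restrictToX, killVars]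
  refine RingHom.ker_eq_of_forall_sub_mem _
    (Polynomial.aeval (R := k) (X 1 : MvPolynomial (Fin 3) k) : Polynomial k →+* _) ?_ fun p => ?_
  · rw [Ideal.span_le]
    rintro _ (rfl | rfl) <;> simp [restrictToX]
  · have := sub_killVars_mem_span_X (R := k) {0, 2} p
    rwa [Set.image_pair, ← hkill] at this

theorem restrictToX_surjective : Function.Surjective (restrictToX k) := by
  refine Function.LeftInverse.surjective (g := Polynomial.aeval (X 1)) fun q => ?_
  have : (restrictToX k).comp (Polynomial.aeval (X 1)) = AlgHom.id k _ := by
    ext; simp [restrictToX]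
  exact DFunLike.congr_fun this q

instance : IsLocalization.Away ((restrictToX k).toRingHom (X 1)) (LaurentPolynomial k) := by
  simpa [restrictToX] using LaurentPolynomial.isLocalization

noncomputable def laurentRestrict :
    Localization.Away (X 1 : MvPolynomial (Fin 3) k) →+* LaurentPolynomial k :=
  IsLocalization.Away.map _ _ (restrictToX k).toRingHom (X 1)

theorem laurentRestrict_surjective : Function.Surjective (laurentRestrict k) :=
  IsLocalization.map_surjective_of_surjective _ _ _ (restrictToX_surjective k)

theorem ker_laurentRestrict :
    RingHom.ker (laurentRestrict k) = Ideal.span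
      {algebraMap (MvPolynomial (Fin 3) k) (Localization.Away (X 1 : MvPolynomial (Fin 3) k)) (X 0),
        algebraMap (MvPolynomial (Fin 3) k) _ (X 2)} := by
  rw [← Set.image_pair, ← Ideal.map_span, ← ker_restrictToX]
  exact IsLocalization.ker_map _ _ (Submonoid.map_powers _ _)

end

/-- The quotient `B/PB` is isomorphic as a ring to `k[x,1/x][[y]]`. -/
theorem statement4 (k : Type*) [Field k] :
    Nonempty ((B k ⧸ (P k).map (φ k)) ≃+* PowerSeries (LaurentPolynomial k)) := by
  have hker : RingHom.ker (PowerSeries.map (laurentRestrict k)) = (P k).map (φ k) := by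
    rw [PowerSeries.ker_map_eq_span_C_pair _ (ker_laurentRestrict k)]
    simp [P, φ, Ideal.map_span, Set.image_pair]
  exact ⟨(Ideal.quotEquivOfEq hker.symm).trans <| RingHom.quotientKerEquivOfSurjective <|
    PowerSeries.map_surjective _ (laurentRestrict_surjective k)⟩
end

section
/- Let k be a field, A := k[w,x,z][[y]], B := k[w,x,1/x,z][[y]], φ : A → B the coefficientwise localization map, P the prime ideal of A generated by the constant power series w and z, and S := B_{PB} where PB = P.map φ. The residue field of the local ring S is isomorphic as a field to the fraction field of k[x,1/x][[y]], the power series ring in y over the Laurent polynomial ring k[x,1/x]. -/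
/-!
Sending `w, z ↦ 0` and `x ↦ T` gives a surjection `k[w,x,z]_x → k[T,T⁻¹]` whose kernel is
`(w, z)`: modulo `(w, z)` it is split by `T ↦ x`. Applied coefficientwise it gives a surjection
`B → k[T,T⁻¹][[y]]`, whose kernel consists of the series with all coefficients in `(w, z)`;
as `(w, z)` is finitely generated, this is exactly `PB`. So `B ⧸ PB ≅ k[T,T⁻¹][[y]]`, and the
residue field of `B_PB` is the fraction field of `B ⧸ PB`.
-/

namespace PowerSeries

variable {R S : Type*} [CommRing R] [CommRing S]

theorem coeff_mem_of_mem_map_C {I : Ideal R} {f : R⟦X⟧} (hf : f ∈ I.map C) (n : ℕ) :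
    coeff n f ∈ I := by
  have hle : I.map C ≤ RingHom.ker (map (Ideal.Quotient.mk I)) := by
    refine Ideal.map_le_iff_le_comap.mpr fun a ha => ?_
    simp [RingHom.mem_ker, map_C, Ideal.Quotient.eq_zero_iff_mem.mpr ha]
  simpa [Ideal.Quotient.eq_zero_iff_mem] using congr(coeff n $(RingHom.mem_ker.mp (hle hf)))

theorem mem_map_C_iff_of_fg {I : Ideal R} (hI : I.FG) {f : R⟦X⟧} :
    f ∈ I.map C ↔ ∀ n, coeff n f ∈ I := by
  refine ⟨coeff_mem_of_mem_map_C, fun h => ?_⟩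
  obtain ⟨m, s, rfl⟩ := Submodule.fg_iff_exists_fin_generating_family.mp hI
  choose c hc using fun n => Ideal.mem_span_range_iff_exists_fun.mp (h n)
  have hf : f = ∑ i, mk (fun n => c n i) * C (s i) := by
    ext n
    simp [map_sum, coeff_mul_C, hc]
  rw [hf]
  exact Ideal.sum_mem _ fun i _ =>
    Ideal.mul_mem_left _ _ (Ideal.mem_map_of_mem _ (Ideal.subset_span ⟨i, rfl⟩))

theorem ker_map_of_fg (f : R →+* S) (hf : (RingHom.ker f).FG) :
    RingHom.ker (map f) = (RingHom.ker f).map C := by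
  ext g
  simp [mem_map_C_iff_of_fg hf, PowerSeries.ext_iff]

end PowerSeries

theorem RingHom.ker_eq_of_mk_comp_eq_mk {R S : Type*} [CommRing R] [Semiring S]
    {g : R →+* S} {σ : S →+* R} {I : Ideal R} (hI : I ≤ RingHom.ker g)
    (hσ : (Ideal.Quotient.mk I).comp (σ.comp g) = Ideal.Quotient.mk I) :
    RingHom.ker g = I := by
  refine le_antisymm (fun a ha => ?_) hI
  rw [← Ideal.Quotient.eq_zero_iff_mem, ← RingHom.congr_fun hσ a]
  simp [RingHom.mem_ker.mp ha]

section

open MvPolynomial LaurentPolynomial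

variable (k : Type*) [Field k]

local notation "R₃" => MvPolynomial (Fin 3) k
local notation "Rₓ" => Localization.Away (X 1 : R₃)

noncomputable def awayToLaurent : Rₓ →+* k[T;T⁻¹] :=
  IsLocalization.Away.lift (X 1)
    (g := (aeval ![0, T 1, 0] : R₃ →ₐ[k] k[T;T⁻¹]).toRingHom)
    (by simpa using isUnit_T 1)

noncomputable def laurentToAway : k[T;T⁻¹] →+* Rₓ :=
  LaurentPolynomial.eval₂ (algebraMap k Rₓ)
    (IsLocalization.Away.algebraMap_isUnit (S := Rₓ) (X 1 : R₃)).unit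

@[simp]
theorem awayToLaurent_algebraMap (r : R₃) :
    awayToLaurent k (algebraMap R₃ Rₓ r) = aeval ![0, T 1, 0] r :=
  IsLocalization.Away.lift_eq _ _ _

theorem awayToLaurent_comp_laurentToAway :
    (awayToLaurent k).comp (laurentToAway k) = RingHom.id _ := by
  refine IsLocalization.ringHom_ext (Submonoid.powers (Polynomial.X : Polynomial k)) ?_
  refine Polynomial.ringHom_ext (fun a => ?_) ?_
  · simp [laurentToAway, IsScalarTower.algebraMap_apply k R₃ Rₓ]
  · simp [laurentToAway]

theorem mk_comp_laurentToAway_comp_awayToLaurent :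
    (Ideal.Quotient.mk (Ideal.span {algebraMap R₃ Rₓ (X 0), algebraMap R₃ Rₓ (X 2)})).comp
      ((laurentToAway k).comp (awayToLaurent k)) =
    Ideal.Quotient.mk (Ideal.span {algebraMap R₃ Rₓ (X 0), algebraMap R₃ Rₓ (X 2)}) := by
  refine IsLocalization.ringHom_ext (Submonoid.powers (X 1 : R₃)) ?_
  refine MvPolynomial.ringHom_ext (fun a => ?_) (fun i => ?_)
  · simp [laurentToAway, IsScalarTower.algebraMap_apply k R₃ Rₓ]
  · simp only [RingHom.comp_apply, Ideal.Quotient.eq]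
    fin_cases i <;> simp [laurentToAway] <;> exact Ideal.subset_span (by simp)

theorem ker_awayToLaurent :
    RingHom.ker (awayToLaurent k) =
      Ideal.span {algebraMap R₃ Rₓ (X 0), algebraMap R₃ Rₓ (X 2)} :=
  RingHom.ker_eq_of_mk_comp_eq_mk
    (Ideal.span_le.mpr (by simp [Set.insert_subset_iff]))
    (mk_comp_laurentToAway_comp_awayToLaurent k)

theorem awayToLaurent_surjective : Function.Surjective (awayToLaurent k) :=
  fun q => ⟨laurentToAway k q, RingHom.congr_fun (awayToLaurent_comp_laurentToAway k) q⟩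

theorem map_P_eq_ker : (P k).map (φ k) = RingHom.ker (PowerSeries.map (awayToLaurent k)) := by
  rw [PowerSeries.ker_map_of_fg _ (ker_awayToLaurent k ▸ Submodule.fg_span (Set.toFinite _)),
    ker_awayToLaurent, P, Ideal.map_span, Ideal.map_span, Set.image_pair, Set.image_pair]
  simp [φ, PowerSeries.map_C]

noncomputable def quotientMapPEquiv : B k ⧸ (P k).map (φ k) ≃+* PowerSeries k[T;T⁻¹] :=
  (Ideal.quotEquivOfEq (map_P_eq_ker k)).trans
    (RingHom.quotientKerEquivOfSurjective
      (PowerSeries.map_surjective _ (awayToLaurent_surjective k)))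

end

/-- The residue field of `S = B_{PB}` is isomorphic to the fraction field of
`k[x,1/x][[y]]`. -/
theorem statement9 (k : Type*) [Field k] [hPB : ((P k).map (φ k)).IsPrime] :
    Nonempty (IsLocalRing.ResidueField (Localization.AtPrime ((P k).map (φ k))) ≃+*
      FractionRing (PowerSeries (LaurentPolynomial k))) :=
  ⟨IsFractionRing.ringEquivOfRingEquiv (quotientMapPEquiv k)⟩
end
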